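/- arXiv:2106.10149 — 7 statements merged into one kernel-verified Lean document; each statement's English description precedes it below -/
import Mathlib

section
/- Let P ⊆ ℝ² be a finite set and let D be a finite set of nonzero, pairwise non-parallel directions in ℝ². If z ∈ ℝ² is a phantom point of P with respect to D (i.e., z ∉ P and for every v ∈ D there exists p ∈ P with z − p ∈ ℝ • v), then the cardinality of P is at least the cardinality of D. -/
/-- `z` is a potential point of the configuration `P` with respect to the
set of directions `D`: every line with direction `v ∈ D` through `z`
contains a point of `P`. -/
def IsPotential (P D : Set (ℝ × ℝ)) (z : ℝ × ℝ) : Prop :=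
  ∀ v ∈ D, ∃ p ∈ P, ∃ t : ℝ, z - p = t • v

/-- `z` is a phantom point: a potential point not belonging to `P`. -/
def IsPhantom (P D : Set (ℝ × ℝ)) (z : ℝ × ℝ) : Prop :=
  IsPotential P D z ∧ z ∉ P

/-- `P` is located by `D`: every potential point belongs to `P`. -/
def LocatedBy (P D : Set (ℝ × ℝ)) : Prop :=
  ∀ z : ℝ × ℝ, IsPotential P D z → z ∈ P

/-- The line through `p` with direction `v`. -/
def lineThrough (p v : ℝ × ℝ) : Set (ℝ × ℝ) :=
  {x : ℝ × ℝ | ∃ t : ℝ, x = p + t • v}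

theorem phantom_point_card_lower_bound
    (P D : Set (ℝ × ℝ)) (hP : P.Finite) (hD : D.Finite)
    (hD0 : ∀ v ∈ D, v ≠ 0)
    (hDpar : ∀ u ∈ D, ∀ v ∈ D, u ≠ v → LinearIndependent ℝ ![u, v])
    (z : ℝ × ℝ) (hz : IsPhantom P D z) :
    D.ncard ≤ P.ncard := by
  classical
  obtain ⟨hpot, hzP⟩ := hz
  have hchoice : ∀ v ∈ D, ∃ p, p ∈ P ∧ ∃ t : ℝ, z - p = t • v := by
    intro v hv; obtain ⟨p, hp, t, ht⟩ := hpot v hv; exact ⟨p, hp, t, ht⟩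
  set f : ℝ × ℝ → ℝ × ℝ := fun v => if h : v ∈ D then (hchoice v h).choose else 0 with hf
  have hmem : ∀ v ∈ D, f v ∈ P ∧ ∃ t : ℝ, z - f v = t • v := by
    intro v hv
    simp only [hf, dif_pos hv]
    exact (hchoice v hv).choose_spec
  apply Set.ncard_le_ncard_of_injOn f (fun v hv => (hmem v hv).1) _ hP
  intro u hu v hv huv
  by_contra hne
  obtain ⟨t, ht⟩ := (hmem u hu).2
  obtain ⟨s, hs⟩ := (hmem v hv).2
  have hzfu : z - f u ≠ 0 := by
    intro h
    exact hzP (by rw [sub_eq_zero.mp h]; exact (hmem u hu).1)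
  have ht0 : t ≠ 0 := by
    rintro rfl
    rw [zero_smul] at ht
    exact hzfu ht
  have hli := hDpar u hu v hv hne
  rw [LinearIndependent.pair_iff] at hli
  have hc : t • u + (-s) • v = 0 := by
    have : t • u = s • v := by rw [← ht, huv, hs]
    rw [this, neg_smul]; abel
  exact ht0 (hli t (-s) hc).1
end

section
/- (Theorem: n+1 slopes always suffice.) Let n be a natural number, let P ⊆ ℝ² be a finite set with exactly n elements, and let D be a set of n+1 nonzero, pairwise non-parallel directions in ℝ². Then P is located by D; that is, P has no phantom points with respect to D. -/
theorem located_by_succ_many_directions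
    (n : ℕ) (P D : Set (ℝ × ℝ)) (hP : P.Finite) (hPn : P.ncard = n)
    (hD : D.Finite) (hDn : D.ncard = n + 1)
    (hD0 : ∀ v ∈ D, v ≠ 0)
    (hDpar : ∀ u ∈ D, ∀ v ∈ D, u ≠ v → LinearIndependent ℝ ![u, v]) :
    LocatedBy P D := by
  intro z hz
  by_contra hzP
  -- choose, for each direction, a point of P on the line through z
  have hch : ∀ v ∈ D, ∃ p ∈ P, ∃ t : ℝ, z - p = t • v := hz
  choose f hfP t hft using hch
  -- the associated parameter is nonzero
  have ht0 : ∀ v (hv : v ∈ D), t v hv ≠ 0 := by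
    intro v hv h0
    apply hzP
    have := hft v hv
    rw [h0, zero_smul, sub_eq_zero] at this
    rw [this]; exact hfP v hv
  -- injectivity
  have hinj : ∀ u (hu : u ∈ D) v (hv : v ∈ D), f u hu = f v hv → u = v := by
    intro u hu v hv hf
    by_contra hne
    have hli := hDpar u hu v hv hne
    have h1 := hft u hu
    have h2 := hft v hv
    rw [hf] at h1
    have : (t u hu) • u + (-(t v hv)) • v = 0 := by
      rw [neg_smul, ← h1, ← h2]; abel
    have := (LinearIndependent.pair_iff.mp hli _ _ this).1
    exact ht0 u hu this
  -- build an injection from D into P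
  classical
  set g : ℝ × ℝ → ℝ × ℝ := fun v => if h : v ∈ D then f v h else 0 with hg
  have hinjOn : Set.InjOn g D := by
    intro u hu v hv huv
    simp only [hg, dif_pos hu, dif_pos hv] at huv
    exact hinj u hu v hv huv
  have hsub : g '' D ⊆ P := by
    rintro _ ⟨v, hv, rfl⟩
    simp only [hg, dif_pos hv]
    exact hfP v hv
  have h1 : D.ncard = (g '' D).ncard := (Set.ncard_image_of_injOn hinjOn).symm
  have h2 : (g '' D).ncard ≤ P.ncard := Set.ncard_le_ncard hsub hP
  omega
end

section
/- (Projection version of the upper bound.) Let n be a natural number, let P, Q ⊆ ℝ² be finite sets each with exactly n elements, and let D be a set of n+1 nonzero, pairwise non-parallel directions in ℝ². Suppose that for every v ∈ D the family of lines with direction v through points of P equals the family of lines with direction v through points of Q, i.e., { {p + t • v : t ∈ ℝ} : p ∈ P } = { {q + t • v : t ∈ ℝ} : q ∈ Q }. Then P = Q. -/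
theorem projections_determine_configuration
    (n : ℕ) (P Q D : Set (ℝ × ℝ))
    (hP : P.Finite) (hQ : Q.Finite) (hD : D.Finite)
    (hPn : P.ncard = n) (hQn : Q.ncard = n) (hDn : D.ncard = n + 1)
    (hD0 : ∀ v ∈ D, v ≠ 0)
    (hDpar : ∀ u ∈ D, ∀ v ∈ D, u ≠ v → LinearIndependent ℝ ![u, v])
    (hlines : ∀ v ∈ D, (fun p => lineThrough p v) '' P = (fun q => lineThrough q v) '' Q) :
    P = Q := by
  have hsub : P ⊆ Q := by
    intro p hp
    by_contra hpQ
    -- for each direction, find a point of Q on the line through p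
    have key : ∀ v ∈ D, ∃ q ∈ Q, ∃ t : ℝ, t ≠ 0 ∧ q = p + t • v := by
      intro v hv
      have hmem : lineThrough p v ∈ (fun p => lineThrough p v) '' P :=
        ⟨p, hp, rfl⟩
      rw [hlines v hv] at hmem
      obtain ⟨q, hqQ, hq⟩ := hmem
      have hpq : p ∈ lineThrough q v := by
        have : p ∈ lineThrough p v := ⟨0, by simp⟩
        rw [← hq] at this; exact this
      obtain ⟨t, ht⟩ := hpq
      refine ⟨q, hqQ, -t, ?_, ?_⟩
      · intro h
        have : t = 0 := by simpa using congrArg Neg.neg h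
        subst this
        simp at ht
        exact hpQ (ht ▸ hqQ)
      · rw [ht]; module
    choose! f hfQ t ht0 hft using key
    have hinj : Set.InjOn f D := by
      intro u hu v hv huv
      by_contra hne
      have h1 := hft u hu
      have h2 := hft v hv
      have heq : t u • u + (-(t v)) • v = 0 := by
        have : p + t u • u = p + t v • v := by rw [← h1, huv, h2]
        have h3 : t u • u = t v • v := by
          have := congrArg (fun x => x - p) this
          simpa [add_comm, add_sub_cancel] using this
        rw [h3]; module
      have hli := hDpar u hu v hv hne
      rw [LinearIndependent.pair_iff] at hli
      exact ht0 u hu (hli _ _ heq).1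
    have hle : D.ncard ≤ Q.ncard :=
      Set.ncard_le_ncard_of_injOn f (fun v hv => hfQ v hv) hinj hQ
    rw [hDn, hQn] at hle
    omega
  exact Set.eq_of_subset_of_ncard_le hsub (by rw [hPn, hQn]) hQ
end

section
/- (Theorem: n slopes do not suffice in general; sharpness of n+1.) Let n ≥ 1 and let v₁, …, vₙ ∈ ℝ² be nonzero, pairwise non-parallel vectors. Then the set P = {v₁, …, vₙ} has exactly n elements, and the origin 0 is a phantom point of P with respect to the set of directions D = {v₁, …, vₙ}; in particular, P is not located by D. -/
theorem n_directions_do_not_suffice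
    (n : ℕ) (hn : 1 ≤ n) (v : Fin n → ℝ × ℝ)
    (hv0 : ∀ i, v i ≠ 0)
    (hvpar : ∀ i j, i ≠ j → LinearIndependent ℝ ![v i, v j]) :
    (Set.range v).ncard = n ∧
    IsPhantom (Set.range v) (Set.range v) 0 ∧
    ¬ LocatedBy (Set.range v) (Set.range v) := by
  have hinj : Function.Injective v := by
    intro i j hij
    by_contra h
    have li := hvpar i j h
    have : (![v i, v j] 0 : ℝ × ℝ) = ![v i, v j] 1 := by simp [hij]
    have := li.injective this
    simp at this
  have h0 : (0 : ℝ × ℝ) ∉ Set.range v := by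
    rintro ⟨i, hi⟩
    exact hv0 i hi
  have hphantom : IsPhantom (Set.range v) (Set.range v) 0 := by
    constructor
    · intro w hw
      exact ⟨w, hw, -1, by simp⟩
    · exact h0
  refine ⟨?_, hphantom, ?_⟩
  · simp [Set.ncard_eq_toFinset_card', Set.toFinset_range,
      Finset.card_image_of_injective _ hinj]
  · intro hloc
    exact h0 (hloc 0 hphantom.1)
end

section
/- (Theorem: two points, upper bound.) Let P ⊆ ℝ² be a set with exactly 2 elements and let D be a set of 3 nonzero, pairwise non-parallel directions in ℝ². Then P is located by D; that is, every potential point of P with respect to D belongs to P. -/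
theorem two_points_three_directions
    (P D : Set (ℝ × ℝ)) (hP : P.Finite) (hPn : P.ncard = 2)
    (hD : D.Finite) (hDn : D.ncard = 3)
    (hD0 : ∀ v ∈ D, v ≠ 0)
    (hDpar : ∀ u ∈ D, ∀ v ∈ D, u ≠ v → LinearIndependent ℝ ![u, v]) :
    LocatedBy P D := by
  intro z hz
  obtain ⟨a, b, hab, rfl⟩ := Set.ncard_eq_two.mp hPn
  obtain ⟨u, v, w, huv, huw, hvw, rfl⟩ := Set.ncard_eq_three.mp hDn
  obtain ⟨pu, hpu, tu, hu⟩ := hz u (by simp)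
  obtain ⟨pv, hpv, tv, hv⟩ := hz v (by simp)
  obtain ⟨pw, hpw, tw, hw⟩ := hz w (by simp)
  have key : ∀ (x y : ℝ × ℝ) (s t : ℝ) (p : ℝ × ℝ), LinearIndependent ℝ ![x, y] →
      z - p = s • x → z - p = t • y → z = p := by
    intro x y s t p hli h1 h2
    have hsum : s • x + (-t) • y = 0 := by
      have : s • x = t • y := h1 ▸ h2 ▸ rfl
      rw [this]; module
    have hs : s = 0 ∧ -t = 0 := (LinearIndependent.pair_iff.mp hli) s (-t) hsum
    have : z - p = 0 := by rw [h1, hs.1, zero_smul]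
    exact sub_eq_zero.mp this
  have kuv := key u v tu tv
  have kuw := key u w tu tw
  have kvw := key v w tv tw
  simp only [Set.mem_insert_iff, Set.mem_singleton_iff] at hpu hpv hpw ⊢
  have liuv : LinearIndependent ℝ ![u, v] := hDpar u (by simp) v (by simp) huv
  have liuw : LinearIndependent ℝ ![u, w] := hDpar u (by simp) w (by simp) huw
  have livw : LinearIndependent ℝ ![v, w] := hDpar v (by simp) w (by simp) hvw
  rcases hpu with rfl | rfl <;> rcases hpv with h2 | h2 <;> rcases hpw with h3 | h3 <;>
    subst_vars <;>
    first
      | exact Or.inl (kuv _ liuv hu hv)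
      | exact Or.inl (kuw _ liuw hu hw)
      | exact Or.inl (kvw _ livw hv hw)
      | exact Or.inr (kuv _ liuv hu hv)
      | exact Or.inr (kuw _ liuw hu hw)
      | exact Or.inr (kvw _ livw hv hw)
end

section
/- (Theorem: three points, upper bound with the tiered slopes.) Every set P ⊆ ℝ² with exactly 3 elements is located by the four directions D = {(1,0), (0,1), (1,1), (1,−1)}; that is, every potential point of P with respect to D belongs to P. -/
theorem three_points_four_tiered_directions
    (P : Set (ℝ × ℝ)) (hP : P.Finite) (hPn : P.ncard = 3) :
    LocatedBy P {((1 : ℝ), (0 : ℝ)), ((0 : ℝ), (1 : ℝ)),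
      ((1 : ℝ), (1 : ℝ)), ((1 : ℝ), (-1 : ℝ))} := by
  intro z hz
  by_contra hzP
  obtain ⟨a, ha, ta, hta⟩ := hz (1, 0) (by simp)
  obtain ⟨b, hb, tb, htb⟩ := hz (0, 1) (by simp)
  obtain ⟨c, hc, tc, htc⟩ := hz (1, 1) (by simp)
  obtain ⟨d, hd, td, htd⟩ := hz (1, -1) (by simp)
  have ha1 : z.1 - a.1 = ta := by have := congrArg Prod.fst hta; simpa using this
  have ha2 : z.2 - a.2 = 0 := by have := congrArg Prod.snd hta; simpa using this
  have hb1 : z.1 - b.1 = 0 := by have := congrArg Prod.fst htb; simpa using this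
  have hb2 : z.2 - b.2 = tb := by have := congrArg Prod.snd htb; simpa using this
  have hc1 : z.1 - c.1 = tc := by have := congrArg Prod.fst htc; simpa using this
  have hc2 : z.2 - c.2 = tc := by have := congrArg Prod.snd htc; simpa using this
  have hd1 : z.1 - d.1 = td := by have := congrArg Prod.fst htd; simpa using this
  have hd2 : z.2 - d.2 = -td := by have := congrArg Prod.snd htd; simpa using this
  have ea : a.2 = z.2 := by linarith
  have eb : b.1 = z.1 := by linarith
  have ec : z.1 - c.1 = z.2 - c.2 := by linarith
  have ed : z.1 - d.1 = -(z.2 - d.2) := by linarith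
  have hza : z ≠ a := fun h => hzP (h ▸ ha)
  have hzb : z ≠ b := fun h => hzP (h ▸ hb)
  have hzc : z ≠ c := fun h => hzP (h ▸ hc)
  have hzd : z ≠ d := fun h => hzP (h ▸ hd)
  have hab : a ≠ b := by
    intro h
    have h1 : a.1 = z.1 := by rw [h]; exact eb
    exact hza (Prod.ext h1.symm ea.symm)
  have hac : a ≠ c := by
    intro h
    have h2 : c.2 = z.2 := by rw [← h]; exact ea
    have h1 : c.1 = z.1 := by linarith
    exact hzc (Prod.ext h1.symm h2.symm)
  have had : a ≠ d := by
    intro h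
    have h2 : d.2 = z.2 := by rw [← h]; exact ea
    have h1 : d.1 = z.1 := by linarith
    exact hzd (Prod.ext h1.symm h2.symm)
  have hbc : b ≠ c := by
    intro h
    have h1 : c.1 = z.1 := by rw [← h]; exact eb
    have h2 : c.2 = z.2 := by linarith
    exact hzc (Prod.ext h1.symm h2.symm)
  have hbd : b ≠ d := by
    intro h
    have h1 : d.1 = z.1 := by rw [← h]; exact eb
    have h2 : d.2 = z.2 := by linarith
    exact hzd (Prod.ext h1.symm h2.symm)
  have hcd : c ≠ d := by
    intro h
    rw [h] at ec
    have e1 : z.1 = d.1 := by linarith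
    have e2 : z.2 = d.2 := by linarith
    exact hzd (Prod.ext e1 e2)
  have hsub : ({a, b, c, d} : Set (ℝ × ℝ)) ⊆ P := by
    intro x hx
    rcases hx with h | h | h | h <;> subst h <;> assumption
  have hcard : ({a, b, c, d} : Set (ℝ × ℝ)).ncard = 4 := by
    rw [Set.ncard_insert_of_notMem (by simp [hab, hac, had]),
        Set.ncard_insert_of_notMem (by simp [hbc, hbd]),
        Set.ncard_insert_of_notMem (by simp [hcd]),
        Set.ncard_singleton]
  have := Set.ncard_le_ncard hsub hP
  omega
end

section
/- (Phantom-point forcing example, Figure 7.) Let P ⊆ ℝ² be a set with exactly 4 elements whose points have x-coordinates in {0,1,2} and y-coordinates in {0,1,2}, and suppose z = (0,1) is a potential point of P with respect to the five directions D = {(1,0), (0,1), (1,1), (1,−1), (2,1)} but z ∉ P. Then (1,2) ∈ P, (1,0) ∈ P, and (2,2) ∈ P, and moreover P must contain a point with x-coordinate 0 and a point with y-coordinate 1, neither equal to z; this forces P to have at least 5 elements, a contradiction. Hence no such P exists. -/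
theorem phantom_point_forcing_figure7
    (P : Set (ℝ × ℝ)) (hP : P.Finite) (hPn : P.ncard = 4)
    (hgrid : ∀ p ∈ P, p.1 ∈ ({0, 1, 2} : Set ℝ) ∧ p.2 ∈ ({0, 1, 2} : Set ℝ))
    (hz : IsPotential P {((1 : ℝ), (0 : ℝ)), ((0 : ℝ), (1 : ℝ)), ((1 : ℝ), (1 : ℝ)),
      ((1 : ℝ), (-1 : ℝ)), ((2 : ℝ), (1 : ℝ))} ((0 : ℝ), (1 : ℝ)))
    (hznot : ((0 : ℝ), (1 : ℝ)) ∉ P) :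
    (((1 : ℝ), (2 : ℝ)) ∈ P ∧ ((1 : ℝ), (0 : ℝ)) ∈ P ∧ ((2 : ℝ), (2 : ℝ)) ∈ P ∧
      (∃ p ∈ P, p ≠ ((0 : ℝ), (1 : ℝ)) ∧ p.1 = 0) ∧
      (∃ p ∈ P, p ≠ ((0 : ℝ), (1 : ℝ)) ∧ p.2 = 1) ∧
      5 ≤ P.ncard) ∧ False := by
  suffices h : False by exact ⟨h.elim, h⟩
  obtain ⟨⟨a1, a2⟩, haP, ta, ha⟩ := hz (1, 0) (by simp)
  obtain ⟨⟨b1, b2⟩, hbP, tb, hb⟩ := hz (0, 1) (by simp)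
  obtain ⟨⟨c1, c2⟩, hcP, tc, hc⟩ := hz (1, 1) (by simp)
  obtain ⟨⟨d1, d2⟩, hdP, td, hd⟩ := hz (1, -1) (by simp)
  obtain ⟨⟨e1, e2⟩, heP, te, he⟩ := hz (2, 1) (by simp)
  simp [Prod.ext_iff] at ha hb hc hd he
  obtain ⟨hag1, hag2⟩ := hgrid _ haP
  obtain ⟨hbg1, hbg2⟩ := hgrid _ hbP
  obtain ⟨hcg1, hcg2⟩ := hgrid _ hcP
  obtain ⟨hdg1, hdg2⟩ := hgrid _ hdP
  obtain ⟨heg1, heg2⟩ := hgrid _ heP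
  simp only [Set.mem_insert_iff, Set.mem_singleton_iff] at hag1 hag2 hbg1 hbg2 hcg1 hcg2 hdg1 hdg2 heg1 heg2
  -- a : y = 1, x ∈ {1,2}
  have ha2 : a2 = 1 := by nlinarith [ha.2]
  have ha1 : a1 = 1 ∨ a1 = 2 := by
    rcases hag1 with h | h | h
    · exact absurd haP (by rw [h, ha2] at haP ⊢; exact hznot)
    · exact Or.inl h
    · exact Or.inr h
  -- b : x = 0, y ∈ {0,2}
  have hb1 : b1 = 0 := by nlinarith [hb.1]
  have hb2 : b2 = 0 ∨ b2 = 2 := by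
    rcases hbg2 with h | h | h
    · exact Or.inl h
    · exact absurd hbP (by rw [h, hb1] at hbP ⊢; exact hznot)
    · exact Or.inr h
  -- c = (1,2)
  have hc' : c1 = 1 ∧ c2 = 2 := by
    have hrel : c2 = c1 + 1 := by nlinarith [hc.1, hc.2]
    rcases hcg1 with h | h | h
    · exfalso; apply hznot
      have : c1 = 0 ∧ c2 = 1 := ⟨h, by rw [hrel, h]; ring⟩
      rw [← this.1, ← this.2]; exact hcP
    · exact ⟨h, by rw [hrel, h]; ring⟩
    · exfalso; rcases hcg2 with h2 | h2 | h2 <;> nlinarith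
  -- d = (1,0)
  have hd' : d1 = 1 ∧ d2 = 0 := by
    have hrel : d2 = 1 - d1 := by nlinarith [hd.1, hd.2]
    rcases hdg1 with h | h | h
    · exfalso; apply hznot
      have : d1 = 0 ∧ d2 = 1 := ⟨h, by rw [hrel, h]; ring⟩
      rw [← this.1, ← this.2]; exact hdP
    · exact ⟨h, by rw [hrel, h]; ring⟩
    · exfalso; rcases hdg2 with h2 | h2 | h2 <;> nlinarith
  -- e = (2,2)
  have he' : e1 = 2 ∧ e2 = 2 := by
    have hrel : e1 = 2 * e2 - 2 := by nlinarith [he.1, he.2]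
    rcases heg2 with h | h | h
    · exfalso; rcases heg1 with h1 | h1 | h1 <;> nlinarith
    · exfalso; apply hznot
      have : e1 = 0 ∧ e2 = 1 := ⟨by rw [hrel, h]; ring, h⟩
      rw [← this.1, ← this.2]; exact heP
    · exact ⟨by rw [hrel, h]; ring, h⟩
  subst ha2 hb1
  obtain ⟨hc1, hc2⟩ := hc'; subst hc1 hc2
  obtain ⟨hd1, hd2⟩ := hd'; subst hd1 hd2
  obtain ⟨he1, he2⟩ := he'; subst he1 he2
  -- the five points (a1,1), (0,b2), (1,2), (1,0), (2,2) are distinct and in P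
  have hsub : ({(a1, 1), (0, b2), (1, 2), (1, 0), (2, 2)} : Set (ℝ × ℝ)) ⊆ P := by
    intro x hx
    simp only [Set.mem_insert_iff, Set.mem_singleton_iff] at hx
    rcases hx with h | h | h | h | h <;> subst h <;> assumption
  have hle : ({(a1, 1), (0, b2), (1, 2), (1, 0), (2, 2)} : Set (ℝ × ℝ)).ncard ≤ 4 :=
    hPn ▸ Set.ncard_le_ncard hsub hP
  have hcard : ({(a1, 1), (0, b2), (1, 2), (1, 0), (2, 2)} : Set (ℝ × ℝ)).ncard = 5 := by
    rw [Set.ncard_insert_of_notMem, Set.ncard_insert_of_notMem,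
      Set.ncard_insert_of_notMem, Set.ncard_insert_of_notMem, Set.ncard_singleton]
    all_goals simp [Prod.ext_iff]
    rintro rfl
    rcases ha1 with h | h <;> norm_num at h
  omega
end
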